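/- arXiv:1707.09091 — 5 statements merged into one kernel-verified Lean document; each statement's English description precedes it below -/
import Mathlib

section
/- Let N be a nonempty finite set and let f : 2^N → ℝ ∪ {-∞} be a set function whose effective domain dom f = {X ⊆ N : f(X) > -∞} is nonempty. If f is M♮-concave, then its conjugate function g(p) = max{ f(X) − p(X) : X ⊆ N } is submodular on ℝ^N. -/
open Finset

/-- A set function `f : 2^N → ℝ ∪ {-∞}` is M♮-concave if for any `X, Y` in the
effective domain and any `i ∈ X \ Y`, either
`f(X) + f(Y) ≤ f(X - i) + f(Y + i)`, or there exists `j ∈ Y \ X` with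
`f(X) + f(Y) ≤ f(X - i + j) + f(Y + i - j)`. -/
def MNatConcave {N : Type*} [DecidableEq N] (f : Finset N → WithBot ℝ) : Prop :=
  ∀ X Y : Finset N, f X ≠ ⊥ → f Y ≠ ⊥ → ∀ i ∈ X \ Y,
    (f X + f Y ≤ f (X.erase i) + f (insert i Y)) ∨
    ∃ j ∈ Y \ X, f X + f Y ≤ f (insert j (X.erase i)) + f ((insert i Y).erase j)

/-!
Submodularity is proved one coordinate at a time. Raising the price of a single item `i` by
`t ≥ 0` at two price vectors `a ≤ b` with `a i = b i` lowers `g` at `a` by no more than at `b`: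
`g a + g (b + t eᵢ) ≤ g (a + t eᵢ) + g b`. To see this, take maximisers `X` of
`f - a` and `Y` of `f - (b + t eᵢ)`; when `i ∈ X \ Y`, the M♮-exchange of `i` produces sets
`X'`, `Y'` with `f X + f Y ≤ f X' + f Y'` whose total price under `a + t eᵢ` and `b` does not
exceed that of `X` and `Y` under `a` and `b + t eᵢ`; otherwise `X' = X`, `Y' = Y` will do.
Raising `p ⊓ q` to `p` coordinate by coordinate, over the items with `q i < p i`, while `q`
rises to `p ⊔ q` in step, and adding up gives the theorem.
-/

theorem sum_add_single_apply {N M : Type*} [DecidableEq N] [AddCommMonoid M] (c : N → M)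
    (i : N) (t : M) (S : Finset N) :
    ∑ k ∈ S, (c + Pi.single i t : N → M) k = ∑ k ∈ S, c k + if i ∈ S then t else 0 := by
  simp only [Pi.add_apply, sum_add_distrib, sum_pi_single']

section Conjugate

variable {N : Type*} [Fintype N]

def IsConjugate (f : Finset N → WithBot ℝ) (g : (N → ℝ) → ℝ) : Prop :=
  ∀ p : N → ℝ, (g p : WithBot ℝ) =
    (univ : Finset (Finset N)).sup fun X => f X + ((-(∑ i ∈ X, p i) : ℝ) : WithBot ℝ)

namespace IsConjugate

variable {f : Finset N → WithBot ℝ} {g : (N → ℝ) → ℝ}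

theorem le_apply (hg : IsConjugate f g) (p : N → ℝ) (X : Finset N) :
    f X + ((-(∑ i ∈ X, p i) : ℝ) : WithBot ℝ) ≤ g p := by
  rw [hg p]
  exact le_sup (f := fun X => f X + ((-(∑ i ∈ X, p i) : ℝ) : WithBot ℝ)) (mem_univ X)

theorem exists_apply_eq (hg : IsConjugate f g) (p : N → ℝ) :
    ∃ X, f X ≠ ⊥ ∧
      (g p : WithBot ℝ) = f X + ((-(∑ i ∈ X, p i) : ℝ) : WithBot ℝ) := by
  obtain ⟨X, -, hX⟩ := exists_mem_eq_sup (univ : Finset (Finset N)) univ_nonempty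
    fun X => f X + ((-(∑ i ∈ X, p i) : ℝ) : WithBot ℝ)
  refine ⟨X, fun hbot => ?_, (hg p).trans hX⟩
  rw [← hg p, hbot, WithBot.bot_add] at hX
  exact WithBot.coe_ne_bot hX

theorem add_le_add_of_exchange (hg : IsConjugate f g) {a a' b b' : N → ℝ}
    {X Y X' Y' : Finset N}
    (hX : (g a : WithBot ℝ) = f X + ((-(∑ k ∈ X, a k) : ℝ) : WithBot ℝ))
    (hY : (g b' : WithBot ℝ) = f Y + ((-(∑ k ∈ Y, b' k) : ℝ) : WithBot ℝ))
    (hexch : f X + f Y ≤ f X' + f Y')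
    (hprice : ∑ k ∈ X', a' k + ∑ k ∈ Y', b k ≤ ∑ k ∈ X, a k + ∑ k ∈ Y, b' k) :
    g a + g b' ≤ g a' + g b := by
  have key : ((g a + g b' : ℝ) : WithBot ℝ) ≤ ((g a' + g b : ℝ) : WithBot ℝ) :=
    calc ((g a + g b' : ℝ) : WithBot ℝ)
        = f X + f Y + ((-(∑ k ∈ X, a k + ∑ k ∈ Y, b' k) : ℝ) : WithBot ℝ) := by
          rw [WithBot.coe_add, hX, hY, neg_add, WithBot.coe_add, add_add_add_comm]
      _ ≤ f X' + f Y' + ((-(∑ k ∈ X, a k + ∑ k ∈ Y, b' k) : ℝ) : WithBot ℝ) := by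
          gcongr
      _ ≤ f X' + f Y' + ((-(∑ k ∈ X', a' k + ∑ k ∈ Y', b k) : ℝ) : WithBot ℝ) := by
          exact add_le_add_right (WithBot.coe_le_coe.2 (neg_le_neg hprice)) _
      _ = (f X' + ((-(∑ k ∈ X', a' k) : ℝ) : WithBot ℝ)) +
            (f Y' + ((-(∑ k ∈ Y', b k) : ℝ) : WithBot ℝ)) := by
          rw [neg_add, WithBot.coe_add, add_add_add_comm]
      _ ≤ ((g a' + g b : ℝ) : WithBot ℝ) := by
          rw [WithBot.coe_add]
          exact add_le_add (hg.le_apply a' X') (hg.le_apply b Y')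
  exact_mod_cast key

variable [DecidableEq N]

theorem add_le_add_single (hg : IsConjugate f g) (hf : MNatConcave f) {a b : N → ℝ}
    (hab : a ≤ b) {i : N} (hi : a i = b i) {t : ℝ} (ht : 0 ≤ t) :
    g a + g (b + Pi.single i t) ≤ g (a + Pi.single i t) + g b := by
  obtain ⟨X, hXbot, hX⟩ := hg.exists_apply_eq a
  obtain ⟨Y, hYbot, hY⟩ := hg.exists_apply_eq (b + Pi.single i t)
  suffices ∃ X' Y', f X + f Y ≤ f X' + f Y' ∧
      ∑ k ∈ X', a k + (if i ∈ X' then t else 0) + ∑ k ∈ Y', b k ≤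
        ∑ k ∈ X, a k + (∑ k ∈ Y, b k + if i ∈ Y then t else 0) by
    obtain ⟨X', Y', hexch, hprice⟩ := this
    refine hg.add_le_add_of_exchange hX hY hexch ?_
    rwa [sum_add_single_apply, sum_add_single_apply]
  by_cases hiY : i ∈ Y
  · refine ⟨X, Y, le_rfl, ?_⟩
    rw [if_pos hiY]
    split_ifs <;> linarith
  simp only [if_neg hiY, add_zero]
  by_cases hiX : i ∈ X
  swap
  · exact ⟨X, Y, le_rfl, by rw [if_neg hiX, add_zero]⟩
  rcases hf X Y hXbot hYbot i (mem_sdiff.2 ⟨hiX, hiY⟩) with hexch | ⟨j, hj, hexch⟩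
  · refine ⟨_, _, hexch, ?_⟩
    rw [sum_erase_eq_sub hiX, sum_insert hiY, if_neg (notMem_erase i X)]
    linarith
  · obtain ⟨hjY, hjX⟩ := mem_sdiff.1 hj
    have hji : j ≠ i := ne_of_mem_of_not_mem hjY hiY
    refine ⟨_, _, hexch, ?_⟩
    rw [sum_insert (fun h => hjX (mem_of_mem_erase h)), sum_erase_eq_sub hiX,
      sum_erase_eq_sub (mem_insert_of_mem hjY), sum_insert hiY,
      if_neg (by simp [hji.symm])]
    linarith [hab j]

theorem add_le_add_sum_single (hg : IsConjugate f g) (hf : MNatConcave f) {a b : N → ℝ}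
    (hab : a ≤ b) (δ : N → ℝ) (T : Finset N) (hT : ∀ i ∈ T, a i = b i ∧ 0 ≤ δ i) :
    g a + g (b + ∑ i ∈ T, Pi.single i (δ i)) ≤
      g (a + ∑ i ∈ T, Pi.single i (δ i)) + g b := by
  induction T using Finset.induction_on with
  | empty => simp
  | insert i T hiT ih =>
    set u := ∑ k ∈ T, Pi.single k (δ k)
    have hstep := hg.add_le_add_single hf (add_le_add_left hab u)
      (congrArg (· + u i) (hT i (mem_insert_self i T)).1) (hT i (mem_insert_self i T)).2
    have hcomm : ∀ c : N → ℝ,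
        c + ∑ k ∈ insert i T, Pi.single k (δ k) = c + u + Pi.single i (δ i) :=
      fun c => by rw [sum_insert hiT]; abel
    rw [hcomm, hcomm]
    linarith [ih fun k hk => hT k (mem_insert_of_mem hk)]

end IsConjugate

end Conjugate

theorem conjugate_submodular_of_mnat_concave_general
    {N : Type*} [Fintype N] [DecidableEq N]
    (f : Finset N → WithBot ℝ)
    (g : (N → ℝ) → ℝ)
    (hg : ∀ p : N → ℝ,
      (g p : WithBot ℝ) =
        (Finset.univ : Finset (Finset N)).sup
          (fun X => f X + ((-(∑ i ∈ X, p i) : ℝ) : WithBot ℝ)))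
    (hf : MNatConcave f) :
    ∀ p q : N → ℝ, g (p ⊔ q) + g (p ⊓ q) ≤ g p + g q := by
  intro p q
  set D := univ.filter fun i => q i < p i
  have h := IsConjugate.add_le_add_sum_single hg hf (inf_le_right : p ⊓ q ≤ q) (p - q) D
    fun i hi => by
      have hi : q i < p i := (mem_filter.1 hi).2
      exact ⟨min_eq_right hi.le, sub_nonneg.2 hi.le⟩
  have hp : p ⊓ q + ∑ i ∈ D, Pi.single i ((p - q) i) = p := by
    ext j
    simp only [Pi.sub_apply, Pi.add_apply, Pi.inf_apply, Finset.sum_apply, Pi.single_apply,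
      sum_ite_eq, mem_filter, mem_univ, true_and, D]
    grind
  have hpq : q + ∑ i ∈ D, Pi.single i ((p - q) i) = p ⊔ q := by
    ext j
    simp only [Pi.sub_apply, Pi.add_apply, Pi.sup_apply, Finset.sum_apply, Pi.single_apply,
      sum_ite_eq, mem_filter, mem_univ, true_and, D]
    grind
  rw [hp, hpq] at h
  linarith

/-- If `f` is M♮-concave, then its conjugate
`g(p) = max { f(X) - p(X) : X ⊆ N }` is submodular. -/
theorem conjugate_submodular_of_mnat_concave
    {N : Type*} [Fintype N] [DecidableEq N] [Nonempty N]
    (f : Finset N → WithBot ℝ) (hdom : ∃ X : Finset N, f X ≠ ⊥)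
    (g : (N → ℝ) → ℝ)
    (hg : ∀ p : N → ℝ,
      (g p : WithBot ℝ) =
        (Finset.univ : Finset (Finset N)).sup
          (fun X => f X + ((-(∑ i ∈ X, p i) : ℝ) : WithBot ℝ)))
    (hf : MNatConcave f) :
    ∀ p q : N → ℝ, g (p ⊔ q) + g (p ⊓ q) ≤ g p + g q :=
  conjugate_submodular_of_mnat_concave_general f g hg hf
end

section
/- Let N be a finite set and let B be a family of equi-cardinal subsets of N. Then B is connected if and only if for any distinct X, Y ∈ B there exist distinct elements i_1, …, i_m ∈ X \ Y and distinct elements j_1, …, j_m ∈ Y \ X, where m = |X \ Y| = |Y \ X|, such that Y ∪ {i_1, …, i_k} \ {j_1, …, j_k} ∈ B for every k = 1, 2, …, m. -/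
/-!
For the forward direction, induct on `|X \ Y|`: connectedness provides one exchange
`Y' = Y + i - j ∈ B` with `i ∈ X \ Y`, `j ∈ Y \ X`, after which `X \ Y' = (X \ Y) - i`, so
by induction there is an exchange chain from `Y'` to `X`; prefixing it with `(i, j)` gives one
from `Y` to `X`, because `(Y + i + I) - j - J = (Y' + I) - J` as long as `j ∉ I ⊆ X`.
Conversely the first step of a chain is a single exchange, and the chain is nonempty since
`X ≠ Y` and `|X| = |Y|` force `X \ Y ≠ ∅`.
-/

open Finset

section

variable {α : Type*} [DecidableEq α]

namespace Finset

theorem sdiff_erase_insert_of_notMem {X Y : Finset α} {i j : α} (hj : j ∉ X) :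
    X \ (insert i Y).erase j = (X \ Y).erase i := by
  ext a; by_cases a = j <;> grind

theorem erase_insert_sdiff_of_mem {X Y : Finset α} {i j : α} (hi : i ∈ X) :
    (insert i Y).erase j \ X = (Y \ X).erase j := by
  ext a; grind

theorem union_insert_sdiff_insert {Y I J : Finset α} {i j : α} (hj : j ∉ I) :
    (Y ∪ insert i I) \ insert j J = ((insert i Y).erase j ∪ I) \ J := by
  ext a; grind

end Finset

theorem Fin.image_cons_Iic_zero {n : ℕ} (x : α) (f : Fin n → α) :
    (Iic 0).image (Fin.cons x f : Fin (n + 1) → α) = {x} := by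
  ext a; simp [eq_comm]

theorem Fin.image_cons_Iic_succ {n : ℕ} (x : α) (f : Fin n → α) (k : Fin n) :
    (Iic k.succ).image (Fin.cons x f : Fin (n + 1) → α) = insert x ((Iic k).image f) := by
  ext a; simp [Fin.exists_fin_succ, eq_comm]

theorem Fin.Iic_mk_zero {n : ℕ} (hn : 0 < n) : Iic (⟨0, hn⟩ : Fin n) = {⟨0, hn⟩} := by
  ext l; simp [Fin.le_def, Fin.ext_iff]

def ExchangeConnected (B : Set (Finset α)) : Prop :=
  ∀ X ∈ B, ∀ Y ∈ B, X ≠ Y → ∃ i ∈ X \ Y, ∃ j ∈ Y \ X, (insert i Y).erase j ∈ B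

def IsExchangeChain (B : Set (Finset α)) (X Y : Finset α) {m : ℕ} (i j : Fin m → α) : Prop :=
  Function.Injective i ∧ Function.Injective j ∧ (∀ k, i k ∈ X \ Y) ∧ (∀ k, j k ∈ Y \ X) ∧
    ∀ k, (Y ∪ (Iic k).image i) \ (Iic k).image j ∈ B

namespace IsExchangeChain

variable {B : Set (Finset α)} {X Y : Finset α}

theorem cons {m : ℕ} {i j : Fin m → α} {i₀ j₀ : α} (hi₀ : i₀ ∈ X \ Y) (hj₀ : j₀ ∈ Y \ X)
    (hY' : (insert i₀ Y).erase j₀ ∈ B) (h : IsExchangeChain B X ((insert i₀ Y).erase j₀) i j) :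
    IsExchangeChain B X Y (Fin.cons i₀ i : Fin (m + 1) → α) (Fin.cons j₀ j) := by
  obtain ⟨hi_inj, hj_inj, hi, hj, hmem⟩ := h
  rw [mem_sdiff] at hi₀ hj₀
  have hi' : ∀ k, i k ∈ (X \ Y).erase i₀ := by
    simpa only [sdiff_erase_insert_of_notMem hj₀.2] using hi
  have hj' : ∀ k, j k ∈ (Y \ X).erase j₀ := by
    simpa only [erase_insert_sdiff_of_mem hi₀.1] using hj
  refine ⟨Fin.cons_injective_iff.2 ⟨?_, hi_inj⟩, Fin.cons_injective_iff.2 ⟨?_, hj_inj⟩,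
    Fin.cases (mem_sdiff.2 hi₀) fun k => mem_of_mem_erase (hi' k),
    Fin.cases (mem_sdiff.2 hj₀) fun k => mem_of_mem_erase (hj' k), Fin.cases ?_ fun k => ?_⟩
  · rintro ⟨k, hk⟩
    exact (mem_erase.1 (hi' k)).1 hk
  · rintro ⟨k, hk⟩
    exact (mem_erase.1 (hj' k)).1 hk
  · rwa [Fin.image_cons_Iic_zero, Fin.image_cons_Iic_zero, union_singleton,
      sdiff_singleton_eq_erase]
  · have hj₀_notMem : j₀ ∉ (Iic k).image i := by
      simp only [mem_image, not_exists, not_and]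
      intro l _ hl
      exact hj₀.2 (hl ▸ (mem_sdiff.1 (mem_of_mem_erase (hi' l))).1)
    rw [Fin.image_cons_Iic_succ, Fin.image_cons_Iic_succ, union_insert_sdiff_insert hj₀_notMem]
    exact hmem k

theorem insert_erase_mem {m : ℕ} {i j : Fin m → α} (h : IsExchangeChain B X Y i j)
    (hm : 0 < m) : (insert (i ⟨0, hm⟩) Y).erase (j ⟨0, hm⟩) ∈ B := by
  obtain ⟨-, -, -, -, hmem⟩ := h
  simpa only [Fin.Iic_mk_zero, image_singleton, union_singleton, sdiff_singleton_eq_erase]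
    using hmem ⟨0, hm⟩

end IsExchangeChain

theorem ExchangeConnected.exists_isExchangeChain {B : Set (Finset α)} (hB : ExchangeConnected B)
    {X Y : Finset α} (hX : X ∈ B) (hY : Y ∈ B) :
    ∃ i j : Fin #(X \ Y) → α, IsExchangeChain B X Y i j := by
  suffices ∀ m, ∀ Y ∈ B, #(X \ Y) = m → ∃ i j : Fin m → α, IsExchangeChain B X Y i j from
    this _ Y hY rfl
  intro m
  induction m with
  | zero =>
    intro Y _ _
    exact ⟨Fin.elim0, Fin.elim0, Function.injective_of_subsingleton _,
      Function.injective_of_subsingleton _, fun k => k.elim0, fun k => k.elim0, fun k => k.elim0⟩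
  | succ m ih =>
    intro Y hY hcard
    have hne : X ≠ Y := by
      rintro rfl
      simp at hcard
    obtain ⟨i₀, hi₀, j₀, hj₀, hY'⟩ := hB X hX Y hY hne
    have hcard' : #(X \ (insert i₀ Y).erase j₀) = m := by
      rw [sdiff_erase_insert_of_notMem (mem_sdiff.1 hj₀).2, card_erase_of_mem hi₀, hcard,
        Nat.add_sub_cancel]
    obtain ⟨i, j, h⟩ := ih _ hY' hcard'
    exact ⟨_, _, h.cons hi₀ hj₀ hY'⟩

theorem exchangeConnected_of_forall_exists_isExchangeChain {B : Set (Finset α)}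
    (hequi : ∀ X ∈ B, ∀ Y ∈ B, #X = #Y)
    (h : ∀ X ∈ B, ∀ Y ∈ B, X ≠ Y → ∃ i j : Fin #(X \ Y) → α, IsExchangeChain B X Y i j) :
    ExchangeConnected B := by
  intro X hX Y hY hne
  have hm : 0 < #(X \ Y) := card_pos.2 <| sdiff_nonempty.2 fun hXY =>
    hne (eq_of_subset_of_card_le hXY (hequi Y hY X hX).le)
  obtain ⟨i, j, hchain⟩ := h X hX Y hY hne
  exact ⟨_, hchain.2.2.1 ⟨0, hm⟩, _, hchain.2.2.2.1 ⟨0, hm⟩, hchain.insert_erase_mem hm⟩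

end

theorem connected_iff_stepwise_exchange_general
    {N : Type*} [DecidableEq N]
    (B : Set (Finset N))
    (hequi : ∀ X ∈ B, ∀ Y ∈ B, X.card = Y.card) :
    (∀ X ∈ B, ∀ Y ∈ B, X ≠ Y →
        ∃ i ∈ X \ Y, ∃ j ∈ Y \ X, (insert i Y).erase j ∈ B)
    ↔
    (∀ X ∈ B, ∀ Y ∈ B, X ≠ Y →
        ∃ i : Fin ((X \ Y).card) → N, ∃ j : Fin ((X \ Y).card) → N,
          Function.Injective i ∧ Function.Injective j ∧
          (∀ k, i k ∈ X \ Y) ∧ (∀ k, j k ∈ Y \ X) ∧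
          ∀ k : Fin ((X \ Y).card),
            (Y ∪ ((Finset.univ.filter (fun l => l ≤ k)).image i)) \
              ((Finset.univ.filter (fun l => l ≤ k)).image j) ∈ B) := by
  simp only [filter_ge_eq_Iic]
  constructor
  · intro hB X hX Y hY _
    exact ExchangeConnected.exists_isExchangeChain hB hX hY
  · exact exchangeConnected_of_forall_exists_isExchangeChain hequi

/-- A family `B` of equi-cardinal subsets of a finite set `N` is connected
(for any distinct `X, Y ∈ B` there are `i ∈ X \ Y`, `j ∈ Y \ X` with
`Y + i - j ∈ B`) iff for any distinct `X, Y ∈ B` there are distinct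
`i_1, …, i_m ∈ X \ Y` and distinct `j_1, …, j_m ∈ Y \ X`, where
`m = |X \ Y| = |Y \ X|`, such that
`Y ∪ {i_1, …, i_k} \ {j_1, …, j_k} ∈ B` for every `k = 1, …, m`. -/
theorem connected_iff_stepwise_exchange
    {N : Type*} [Fintype N] [DecidableEq N]
    (B : Set (Finset N))
    (hequi : ∀ X ∈ B, ∀ Y ∈ B, X.card = Y.card) :
    (∀ X ∈ B, ∀ Y ∈ B, X ≠ Y →
        ∃ i ∈ X \ Y, ∃ j ∈ Y \ X, (insert i Y).erase j ∈ B)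
    ↔
    (∀ X ∈ B, ∀ Y ∈ B, X ≠ Y →
        ∃ i : Fin ((X \ Y).card) → N, ∃ j : Fin ((X \ Y).card) → N,
          Function.Injective i ∧ Function.Injective j ∧
          (∀ k, i k ∈ X \ Y) ∧ (∀ k, j k ∈ Y \ X) ∧
          ∀ k : Fin ((X \ Y).card),
            (Y ∪ ((Finset.univ.filter (fun l => l ≤ k)).image i)) \
              ((Finset.univ.filter (fun l => l ≤ k)).image j) ∈ B) :=
  connected_iff_stepwise_exchange_general B hequi
end

section
/- Let N be a finite set and let g : ℝ^N → ℝ. Then g is submodular if and only if for every p ∈ ℝ^N, all distinct i, j ∈ N, and all reals a, b ≥ 0, it holds that g(p + a·e_i) + g(p + b·e_j) ≥ g(p) + g(p + a·e_i + b·e_j), where e_i and e_j are the i-th and j-th unit vectors of ℝ^N. -/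
/-!
Writing `p = m + u` and `q = m + v` with `m = p ⊓ q`, the increments `u, v` are nonnegative with
disjoint supports, `p ⊔ q = m + u + v`, and submodularity says that the gain from `u` diminishes after
a move by `v`. That property is additive in each of `u` and `v`, so decomposing `u` and `v` into
coordinate moves `Pi.single k (u k)` reduces it to moves along two coordinates, which are distinct
unless one of the moves is zero.
-/

section

variable {α β : Type*}

def IsSubmodular [Lattice α] [Add β] [LE β] (g : α → β) : Prop :=
  ∀ p q, g (p ⊔ q) + g (p ⊓ q) ≤ g p + g q

def DiminishingReturns [Add α] [Add β] [LE β] (g : α → β) (u v : α) : Prop :=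
  ∀ m, g m + g (m + u + v) ≤ g (m + u) + g (m + v)

namespace DiminishingReturns

variable [AddCommMonoid α] [AddCommMonoid β] [PartialOrder β] {g : α → β}

theorem symm {u v : α} (h : DiminishingReturns g u v) : DiminishingReturns g v u := fun m => by
  rw [add_right_comm, add_comm (g (m + v))]
  exact h m

theorem zero_left (g : α → β) (v : α) : DiminishingReturns g 0 v := fun m => by
  simp only [add_zero, le_refl]

variable [IsOrderedCancelAddMonoid β]

theorem add_left {u₁ u₂ v : α} (h₁ : DiminishingReturns g u₁ v) (h₂ : DiminishingReturns g u₂ v) :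
    DiminishingReturns g (u₁ + u₂) v := fun m => by
  rw [← add_assoc m]
  -- add the inequalities at `m` and at `m + u₁`, then cancel their common terms
  refine le_of_add_le_add_right (a := g (m + u₁) + g (m + u₁ + v)) ?_
  convert add_le_add (h₁ m) (h₂ (m + u₁)) using 1 <;> abel

theorem sum_left {ι : Type*} {s : Finset ι} {u : ι → α} {v : α}
    (h : ∀ i ∈ s, DiminishingReturns g (u i) v) : DiminishingReturns g (∑ i ∈ s, u i) v :=
  Finset.sum_induction u (DiminishingReturns g · v) (fun _ _ => add_left) (zero_left g v) h

theorem sum_sum {ι κ : Type*} {s : Finset ι} {t : Finset κ} {u : ι → α} {v : κ → α}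
    (h : ∀ i ∈ s, ∀ j ∈ t, DiminishingReturns g (u i) (v j)) :
    DiminishingReturns g (∑ i ∈ s, u i) (∑ j ∈ t, v j) :=
  sum_left fun i hi => (sum_left fun j hj => (h i hi j hj).symm).symm

end DiminishingReturns

section LatticeOrderedGroup

variable [AddCommGroup α] [Lattice α] [IsOrderedAddMonoid α] [AddCommMagma β] [LE β]

theorem isSubmodular_iff_diminishingReturns {g : α → β} :
    IsSubmodular g ↔ ∀ u v : α, u ⊓ v = 0 → DiminishingReturns g u v := by
  constructor
  · intro h u v huv m
    have hsup : (m + u) ⊔ (m + v) = m + u + v := by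
      rw [← add_sup, add_assoc, ← inf_add_sup u v, huv, zero_add]
    have hinf : (m + u) ⊓ (m + v) = m := by
      rw [← add_inf, huv, add_zero]
    simpa only [hsup, hinf, add_comm (g (m + u + v))] using h (m + u) (m + v)
  · intro h p q
    have hdisj : (p - p ⊓ q) ⊓ (q - p ⊓ q) = 0 := by rw [← inf_sub, sub_self]
    have hsup : p ⊓ q + (p - p ⊓ q) + (q - p ⊓ q) = p ⊔ q := by
      rw [add_sub_cancel, add_sub_assoc', sub_eq_of_eq_add' (inf_add_sup p q).symm]
    have key := h _ _ hdisj (p ⊓ q)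
    rwa [hsup, add_sub_cancel, add_sub_cancel, add_comm (g (p ⊓ q))] at key

end LatticeOrderedGroup

section Pi

variable {N γ : Type*} [DecidableEq N]

theorem single_inf_single_eq_zero [Lattice γ] [Zero γ] {i j : N} (hij : i ≠ j) {a b : γ}
    (ha : 0 ≤ a) (hb : 0 ≤ b) : (Pi.single i a ⊓ Pi.single j b : N → γ) = 0 := by
  ext k
  by_cases hi : k = i <;> by_cases hj : k = j <;> simp_all

variable [Fintype N] [AddCommGroup γ] [LinearOrder γ]
  [AddCommMonoid β] [PartialOrder β] [IsOrderedCancelAddMonoid β]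

theorem diminishingReturns_of_inf_eq_zero {g : (N → γ) → β}
    (H : ∀ i j, i ≠ j → ∀ a b : γ, 0 ≤ a → 0 ≤ b →
      DiminishingReturns g (Pi.single i a) (Pi.single j b))
    {u v : N → γ} (huv : u ⊓ v = 0) : DiminishingReturns g u v := by
  have hk : ∀ k, u k ⊓ v k = 0 := fun k => congrFun huv k
  rw [← Finset.univ_sum_single u, ← Finset.univ_sum_single v]
  refine DiminishingReturns.sum_sum fun i _ j _ => ?_
  by_cases hij : i = j
  · subst hij
    rcases le_total (u i) (v i) with hle | hle
    · rw [← inf_eq_left.2 hle, hk, Pi.single_zero]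
      exact DiminishingReturns.zero_left g _
    · rw [← inf_eq_right.2 hle, hk, Pi.single_zero]
      exact (DiminishingReturns.zero_left g _).symm
  · exact H i j hij _ _ ((hk i).symm.trans_le inf_le_left) ((hk j).symm.trans_le inf_le_right)

end Pi

end

/-- A function `g : ℝ^N → ℝ` is submodular iff for every `p`, all distinct
`i, j ∈ N` and all `a, b ≥ 0`,
`g(p + a·e_i) + g(p + b·e_j) ≥ g(p) + g(p + a·e_i + b·e_j)`. -/
theorem submodular_iff_local
    {N : Type*} [Fintype N] [DecidableEq N]
    (g : (N → ℝ) → ℝ) :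
    (∀ p q : N → ℝ, g (p ⊔ q) + g (p ⊓ q) ≤ g p + g q)
    ↔
    (∀ p : N → ℝ, ∀ i j : N, i ≠ j → ∀ a b : ℝ, 0 ≤ a → 0 ≤ b →
      g p + g (p + Pi.single i a + Pi.single j b) ≤
        g (p + Pi.single i a) + g (p + Pi.single j b)) := by
  refine (isSubmodular_iff_diminishingReturns (g := g)).trans ⟨?_, ?_⟩
  · intro h p i j hij a b ha hb
    exact h _ _ (single_inf_single_eq_zero hij ha hb) p
  · intro H u v huv
    exact diminishingReturns_of_inf_eq_zero (fun i j hij a b ha hb p => H p i j hij a b ha hb) huv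
end

section
/- Let N be a nonempty finite set and let f : 2^N → ℝ ∪ {-∞} be a set function whose effective domain dom f is nonempty, consists of equi-cardinal sets, and is connected, and which satisfies the local exchange property: for any X, Y ∈ dom f with |X \ Y| = 2 there exist i ∈ X \ Y and j ∈ Y \ X with f(X) + f(Y) ≤ f(X − i + j) + f(Y + i − j). Then for every p ∈ ℝ^N, every X ∈ dom f, and every Y ⊆ N with X \ Y = {i_0, i_1} and Y \ X = {j_0, j_1} (i_0 ≠ i_1, j_0 ≠ j_1, |X| = |Y|), it holds that f_p(Y) − f_p(X) ≤ max{ f_p(X, i_0, j_0) + f_p(X, i_1, j_1), f_p(X, i_0, j_1) + f_p(X, i_1, j_0) }, where f_p(X) = f(X) + p(X) and f_p(X, i, j) = f_p(X − i + j) − f_p(X) (interpreted as −∞ when X − i + j ∉ dom f, and the inequality holds trivially with f_p(Y) = −∞ when Y ∉ dom f). -/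
/-!
Apply the local exchange property to `X` and `Y` themselves: since `X \ Y = {i₀, i₁}` it
yields `i ∈ {i₀, i₁}`, `j ∈ {j₀, j₁}` with `f X + f Y ≤ f (X - i + j) + f (Y + i - j)`, and
`Y + i - j` is `X` with the other `i` removed and the other `j` added. The modular part is
unchanged by the exchange, `p(X) + p(Y) = p(X - i + j) + p(Y + i - j)`, so the inequality
carries over to `f_p` and its right-hand side is one of the two terms of the maximum.
-/

open Finset

namespace Finset

variable {N : Type*} [DecidableEq N]

theorem erase_insert_eq_insert_erase_of_sdiff_eq_pair {X Y : Finset N} {i₀ i₁ j₀ j₁ : N}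
    (hXY : X \ Y = {i₀, i₁}) (hYX : Y \ X = {j₀, j₁}) (hi : i₀ ≠ i₁) (hj : j₀ ≠ j₁) :
    (insert i₀ Y).erase j₀ = insert j₁ (X.erase i₁) := by
  ext a
  have ha := congrArg (a ∈ ·) hXY
  have ha' := congrArg (a ∈ ·) hYX
  have hi₀ := congrArg (i₀ ∈ ·) hXY
  have hi₁ := congrArg (i₁ ∈ ·) hXY
  have hj₀ := congrArg (j₀ ∈ ·) hYX
  have hj₁ := congrArg (j₁ ∈ ·) hYX
  simp only [mem_sdiff, mem_insert, mem_singleton, mem_erase, eq_iff_iff] at *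
  grind

variable {M : Type*} [AddCommGroup M]

theorem sum_insert_erase_of_mem_of_notMem (p : N → M) {X : Finset N} {i j : N}
    (hi : i ∈ X) (hj : j ∉ X) :
    ∑ a ∈ insert j (X.erase i), p a = ∑ a ∈ X, p a - p i + p j := by
  rw [sum_insert (fun h => hj (mem_of_mem_erase h)), sum_erase_eq_sub hi, add_comm]

theorem sum_erase_insert_of_notMem_of_mem (p : N → M) {Y : Finset N} {i j : N}
    (hi : i ∉ Y) (hj : j ∈ Y) :
    ∑ a ∈ (insert i Y).erase j, p a = ∑ a ∈ Y, p a + p i - p j := by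
  rw [sum_erase_eq_sub (mem_insert_of_mem hj), sum_insert hi, add_comm (p i)]

theorem sum_exchange_add_sum_exchange (p : N → M) {X Y : Finset N} {i j : N}
    (hi : i ∈ X \ Y) (hj : j ∈ Y \ X) :
    ∑ a ∈ insert j (X.erase i), p a + ∑ a ∈ (insert i Y).erase j, p a =
      ∑ a ∈ Y, p a + ∑ a ∈ X, p a := by
  rw [mem_sdiff] at hi hj
  rw [sum_insert_erase_of_mem_of_notMem p hi.1 hj.2,
    sum_erase_insert_of_notMem_of_mem p hi.2 hj.1]
  abel

end Finset

theorem add_add_add_le_of_le_of_eq {α : Type*} [AddCommMonoid α] [PartialOrder α]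
    [IsOrderedAddMonoid α] {a b c d x y z w : α} (h : b + a ≤ c + d) (hs : x + y = z + w) :
    (a + x) + (b + y) ≤ (c + z) + (d + w) :=
  calc (a + x) + (b + y) = (b + a) + (x + y) := by abel
    _ ≤ (c + d) + (z + w) := by rw [hs]; exact add_le_add_left h _
    _ = (c + z) + (d + w) := add_add_add_comm ..

theorem add_sum_le_of_exchange {N : Type*} [DecidableEq N] (f : Finset N → WithBot ℝ)
    (p : N → ℝ) {X Y : Finset N} {i j : N} (hi : i ∈ X \ Y) (hj : j ∈ Y \ X)
    (hle : f X + f Y ≤ f (insert j (X.erase i)) + f ((insert i Y).erase j)) :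
    (f Y + ((∑ a ∈ Y, p a : ℝ) : WithBot ℝ)) + (f X + ((∑ a ∈ X, p a : ℝ) : WithBot ℝ)) ≤
      (f (insert j (X.erase i)) + ((∑ a ∈ insert j (X.erase i), p a : ℝ) : WithBot ℝ)) +
        (f ((insert i Y).erase j) + ((∑ a ∈ (insert i Y).erase j, p a : ℝ) : WithBot ℝ)) :=
  add_add_add_le_of_le_of_eq hle <| by
    rw [← WithBot.coe_add, ← WithBot.coe_add, sum_exchange_add_sum_exchange p hi hj]

theorem local_exchange_upper_bound_general
    {N : Type*} [DecidableEq N]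
    (f : Finset N → WithBot ℝ)
    (hexc : ∀ X Y : Finset N, f X ≠ ⊥ → f Y ≠ ⊥ → (X \ Y).card = 2 →
      ∃ i ∈ X \ Y, ∃ j ∈ Y \ X,
        f X + f Y ≤ f (insert j (X.erase i)) + f ((insert i Y).erase j)) :
    ∀ p : N → ℝ, ∀ X Y : Finset N, f X ≠ ⊥ →
      ∀ i₀ i₁ j₀ j₁ : N, i₀ ≠ i₁ → j₀ ≠ j₁ →
        X \ Y = {i₀, i₁} → Y \ X = {j₀, j₁} → X.card = Y.card →
        (f Y + ((∑ i ∈ Y, p i : ℝ) : WithBot ℝ)) +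
            (f X + ((∑ i ∈ X, p i : ℝ) : WithBot ℝ)) ≤
          max
            ((f (insert j₀ (X.erase i₀)) +
                ((∑ i ∈ insert j₀ (X.erase i₀), p i : ℝ) : WithBot ℝ)) +
              (f (insert j₁ (X.erase i₁)) +
                ((∑ i ∈ insert j₁ (X.erase i₁), p i : ℝ) : WithBot ℝ)))
            ((f (insert j₁ (X.erase i₀)) +
                ((∑ i ∈ insert j₁ (X.erase i₀), p i : ℝ) : WithBot ℝ)) +
              (f (insert j₀ (X.erase i₁)) +
                ((∑ i ∈ insert j₀ (X.erase i₁), p i : ℝ) : WithBot ℝ))) := by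
  intro p X Y hX i₀ i₁ j₀ j₁ hi hj hXY hYX _
  by_cases hY : f Y = ⊥
  · simp [hY]
  obtain ⟨i, hiXY, j, hjYX, hle⟩ := hexc X Y hX hY (by rw [hXY, card_pair hi])
  have hstep := add_sum_le_of_exchange f p hiXY hjYX hle
  simp only [hXY, mem_insert, mem_singleton] at hiXY
  simp only [hYX, mem_insert, mem_singleton] at hjYX
  have hXY' : X \ Y = {i₁, i₀} := hXY.trans (pair_comm _ _)
  have hYX' : Y \ X = {j₁, j₀} := hYX.trans (pair_comm _ _)
  rcases hiXY with rfl | rfl <;> rcases hjYX with rfl | rfl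
  · rw [erase_insert_eq_insert_erase_of_sdiff_eq_pair hXY hYX hi hj] at hstep
    exact hstep.trans (le_max_left _ _)
  · rw [erase_insert_eq_insert_erase_of_sdiff_eq_pair hXY hYX' hi hj.symm] at hstep
    exact hstep.trans (le_max_right _ _)
  · rw [erase_insert_eq_insert_erase_of_sdiff_eq_pair hXY' hYX hi.symm hj] at hstep
    exact hstep.trans ((add_comm _ _).trans_le (le_max_right _ _))
  · rw [erase_insert_eq_insert_erase_of_sdiff_eq_pair hXY' hYX' hi.symm hj.symm]
      at hstep
    exact hstep.trans ((add_comm _ _).trans_le (le_max_left _ _))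

/-- Under connectedness, equi-cardinality of `dom f` and the local exchange
property, for every `p`, every `X ∈ dom f` and every `Y` with
`X \ Y = {i₀, i₁}` and `Y \ X = {j₀, j₁}` (`|X| = |Y|`), one has
`f_p(Y) - f_p(X) ≤ max{f_p(X,i₀,j₀) + f_p(X,i₁,j₁), f_p(X,i₀,j₁) + f_p(X,i₁,j₀)}`,
where `f_p(Z) = f(Z) + p(Z)` and `f_p(X,i,j) = f_p(X - i + j) - f_p(X)`.
Since `f_p(X)` is a real number, this inequality is equivalently stated (after
adding `2 f_p(X)` to both sides) in `ℝ ∪ {-∞}` as below, which automatically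
incorporates the `-∞` conventions for `Y ∉ dom f` or `X - i + j ∉ dom f`. -/
theorem local_exchange_upper_bound
    {N : Type*} [Fintype N] [DecidableEq N] [Nonempty N]
    (f : Finset N → WithBot ℝ) (hdom : ∃ X : Finset N, f X ≠ ⊥)
    (hequi : ∀ X Y : Finset N, f X ≠ ⊥ → f Y ≠ ⊥ → X.card = Y.card)
    (hconn : ∀ X Y : Finset N, f X ≠ ⊥ → f Y ≠ ⊥ → X ≠ Y →
      ∃ i ∈ X \ Y, ∃ j ∈ Y \ X, f ((insert i Y).erase j) ≠ ⊥)
    (hexc : ∀ X Y : Finset N, f X ≠ ⊥ → f Y ≠ ⊥ → (X \ Y).card = 2 →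
      ∃ i ∈ X \ Y, ∃ j ∈ Y \ X,
        f X + f Y ≤ f (insert j (X.erase i)) + f ((insert i Y).erase j)) :
    ∀ p : N → ℝ, ∀ X Y : Finset N, f X ≠ ⊥ →
      ∀ i₀ i₁ j₀ j₁ : N, i₀ ≠ i₁ → j₀ ≠ j₁ →
        X \ Y = {i₀, i₁} → Y \ X = {j₀, j₁} → X.card = Y.card →
        (f Y + ((∑ i ∈ Y, p i : ℝ) : WithBot ℝ)) +
            (f X + ((∑ i ∈ X, p i : ℝ) : WithBot ℝ)) ≤
          max
            ((f (insert j₀ (X.erase i₀)) +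
                ((∑ i ∈ insert j₀ (X.erase i₀), p i : ℝ) : WithBot ℝ)) +
              (f (insert j₁ (X.erase i₁)) +
                ((∑ i ∈ insert j₁ (X.erase i₁), p i : ℝ) : WithBot ℝ)))
            ((f (insert j₁ (X.erase i₀)) +
                ((∑ i ∈ insert j₁ (X.erase i₀), p i : ℝ) : WithBot ℝ)) +
              (f (insert j₀ (X.erase i₁)) +
                ((∑ i ∈ insert j₀ (X.erase i₁), p i : ℝ) : WithBot ℝ))) :=
  local_exchange_upper_bound_general f hexc
end

section
/- Let N be a nonempty finite set and let B be a connected family of equi-cardinal subsets of N that is the effective domain of a set function satisfying the local exchange property. Then for any X, Y ∈ B with |X \ Y| > 2 and any i_* ∈ X \ Y, there exist i_0 ∈ (X \ Y) \ {i_*} and j_0 ∈ Y \ X with (Y ∪ {i_0}) \ {j_0} ∈ B. -/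
open Finset

/-- Let `B = dom f` be a nonempty connected family of equi-cardinal subsets of
`N`, the effective domain of a set function `f` satisfying the local exchange
property.  Then for any `X, Y ∈ B` with `|X \ Y| > 2` and any `i⋆ ∈ X \ Y`,
there exist `i₀ ∈ (X \ Y) \ {i⋆}` and `j₀ ∈ Y \ X` with
`(Y ∪ {i₀}) \ {j₀} ∈ B`. -/
theorem exists_exchange_avoiding_element
    {N : Type*} [Fintype N] [DecidableEq N] [Nonempty N]
    (f : Finset N → WithBot ℝ) (hdom : ∃ X : Finset N, f X ≠ ⊥)
    (hequi : ∀ X Y : Finset N, f X ≠ ⊥ → f Y ≠ ⊥ → X.card = Y.card)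
    (hconn : ∀ X Y : Finset N, f X ≠ ⊥ → f Y ≠ ⊥ → X ≠ Y →
      ∃ i ∈ X \ Y, ∃ j ∈ Y \ X, f ((insert i Y).erase j) ≠ ⊥)
    (hexc : ∀ X Y : Finset N, f X ≠ ⊥ → f Y ≠ ⊥ → (X \ Y).card = 2 →
      ∃ i ∈ X \ Y, ∃ j ∈ Y \ X,
        f X + f Y ≤ f (insert j (X.erase i)) + f ((insert i Y).erase j)) :
    ∀ X Y : Finset N, f X ≠ ⊥ → f Y ≠ ⊥ → 2 < (X \ Y).card →
      ∀ istar ∈ X \ Y,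
        ∃ i₀ ∈ X \ Y, i₀ ≠ istar ∧
          ∃ j₀ ∈ Y \ X, f ((insert i₀ Y).erase j₀) ≠ ⊥ := by
  intro X Y hX hY hcard istar histar
  rw [mem_sdiff] at histar
  obtain ⟨hisX, hisY⟩ := histar
  have hXY : X ≠ Y := by
    intro h; subst h; simp at hcard
  obtain ⟨i, hi, j, hj, hZ⟩ := hconn X Y hX hY hXY
  rw [mem_sdiff] at hi hj
  obtain ⟨hiX, hiY⟩ := hi
  obtain ⟨hjY, hjX⟩ := hj
  by_cases hii : i = istar
  · subst hii
    set Z : Finset N := (insert i Y).erase j with hZdef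
    have hij : i ≠ j := fun h => hiY (h ▸ hjY)
    have hXZ : X \ Z = (X \ Y).erase i := by
      clear hconn hexc hequi hdom hcard hX hY hZ hXY
      ext x
      simp only [hZdef, mem_sdiff, mem_erase, mem_insert]
      by_cases h1 : x = i <;> by_cases h3 : x = j <;> by_cases h5 : x ∈ Y <;>
        simp_all
    have hZX : Z \ X = (Y \ X).erase j := by
      clear hconn hexc hequi hdom hcard hX hY hZ hXY hXZ
      ext x
      simp only [hZdef, mem_sdiff, mem_erase, mem_insert]
      by_cases h1 : x = i <;> by_cases h3 : x = j <;> by_cases h5 : x ∈ Y <;>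
        simp_all
    have hXZne : (X \ Z).Nonempty := by
      rw [hXZ]
      have h2 : 2 ≤ ((X \ Y).erase i).card := by
        have := card_erase_of_mem (mem_sdiff.mpr ⟨hiX, hiY⟩)
        omega
      exact card_pos.mp (by omega)
    have hXneZ : X ≠ Z := by
      intro h
      rw [← h] at hXZne
      simp at hXZne
    obtain ⟨i', hi', j', hj', hZ'⟩ := hconn X Z hX hZ hXneZ
    rw [hXZ, mem_erase, mem_sdiff] at hi'
    rw [hZX, mem_erase, mem_sdiff] at hj'
    obtain ⟨hi'i, hi'X, hi'Y⟩ := hi'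
    obtain ⟨hj'j, hj'Y, hj'X⟩ := hj'
    set Z' : Finset N := (insert i' Z).erase j' with hZ'def
    have hi'j : i' ≠ j := fun h => hjX (h ▸ hi'X)
    have hi'j' : i' ≠ j' := fun h => hj'X (h ▸ hi'X)
    have hij' : i ≠ j' := fun h => hiY (h ▸ hj'Y)
    have hZ'Y : Z' \ Y = {i, i'} := by
      clear hconn hexc hequi hdom hcard hX hY hZ hZ' hXY hXZ hZX hXZne hXneZ
      ext x
      simp only [hZ'def, hZdef, mem_sdiff, mem_erase, mem_insert, mem_singleton]
      by_cases h1 : x = i <;> by_cases h2 : x = i' <;> by_cases h3 : x = j <;>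
        by_cases h4 : x = j' <;> by_cases h5 : x ∈ Y <;> simp_all
    have hYZ' : Y \ Z' = {j, j'} := by
      clear hconn hexc hequi hdom hcard hX hY hZ hZ' hXY hXZ hZX hXZne hXneZ hZ'Y
      ext x
      simp only [hZ'def, hZdef, mem_sdiff, mem_erase, mem_insert, mem_singleton]
      by_cases h1 : x = i <;> by_cases h2 : x = i' <;> by_cases h3 : x = j <;>
        by_cases h4 : x = j' <;> by_cases h5 : x ∈ Y <;> simp_all
    have hcard2 : (Z' \ Y).card = 2 := by
      rw [hZ'Y]; exact card_pair (Ne.symm hi'i)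
    obtain ⟨u, hu, v, hv, hineq⟩ := hexc Z' Y hZ' hY hcard2
    have hne : f Z' + f Y ≠ ⊥ := by
      simp only [ne_eq, WithBot.add_eq_bot]; tauto
    have hRne1 : f (insert v (Z'.erase u)) ≠ ⊥ := by
      intro h
      rw [h, WithBot.bot_add] at hineq
      exact hne (le_bot_iff.mp hineq)
    have hRne2 : f ((insert u Y).erase v) ≠ ⊥ := by
      intro h
      rw [h, WithBot.add_bot] at hineq
      exact hne (le_bot_iff.mp hineq)
    rw [hZ'Y, mem_insert, mem_singleton] at hu
    rw [hYZ', mem_insert, mem_singleton] at hv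
    have hi'mem : i' ∈ X \ Y := mem_sdiff.mpr ⟨hi'X, hi'Y⟩
    rcases hu with hu | hu
    · -- u = i : use hRne1, rewriting the set
      subst hu
      rcases hv with hv | hv
      · -- v = j, take j₀ = j'
        subst hv
        refine ⟨i', hi'mem, hi'i, j', mem_sdiff.mpr ⟨hj'Y, hj'X⟩, ?_⟩
        have hset : insert v (Z'.erase u) = (insert i' Y).erase j' := by
          clear hconn hexc hequi hdom hcard hX hY hZ hZ' hXY hXZ hZX hXZne hXneZ hZ'Y hYZ' hineq hne hRne1 hRne2 hcard2
          ext x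
          simp only [hZ'def, hZdef, mem_erase, mem_insert]
          by_cases h1 : x = u <;> by_cases h2 : x = i' <;> by_cases h3 : x = v <;>
            by_cases h4 : x = j' <;> by_cases h5 : x ∈ Y <;> simp_all
        rwa [hset] at hRne1
      · -- v = j', take j₀ = j
        subst hv
        refine ⟨i', hi'mem, hi'i, j, mem_sdiff.mpr ⟨hjY, hjX⟩, ?_⟩
        have hset : insert v (Z'.erase u) = (insert i' Y).erase j := by
          clear hconn hexc hequi hdom hcard hX hY hZ hZ' hXY hXZ hZX hXZne hXneZ hZ'Y hYZ' hineq hne hRne1 hRne2 hcard2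
          ext x
          simp only [hZ'def, hZdef, mem_erase, mem_insert]
          by_cases h1 : x = u <;> by_cases h2 : x = i' <;> by_cases h3 : x = j <;>
            by_cases h4 : x = v <;> by_cases h5 : x ∈ Y <;> simp_all
        rwa [hset] at hRne1
    · -- u = i' : use hRne2
      subst hu
      refine ⟨u, hi'mem, hi'i, v, ?_, hRne2⟩
      rcases hv with hv | hv <;> subst hv
      · exact mem_sdiff.mpr ⟨hjY, hjX⟩
      · exact mem_sdiff.mpr ⟨hj'Y, hj'X⟩
  · exact ⟨i, mem_sdiff.mpr ⟨hiX, hiY⟩, hii, j, mem_sdiff.mpr ⟨hjY, hjX⟩, hZ⟩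
end
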